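/- The function u(t) = sin(1/(2 + sin t + sin(π t))) is almost automorphic on ℝ: every real sequence {s'_n} has a subsequence {s_n} such that for some function v : ℝ → ℝ, u(t + s_n) → v(t) and v(t − s_n) → u(t) for each t ∈ ℝ. -/

import Mathlib

/-!
Write `u = h ∘ θ`, where `θ t = (e^{it}, e^{iπt})` winds the line densely around the torus `𝕋²`
and `h z = sin (1 / (2 + Im z₁ + Im z₂))`. Compactness of `𝕋²` gives a subsequence with
`θ sₙ → c`, and then `u (t + sₙ) = h (θ t * θ sₙ) → h (θ t * c)` wherever `h` is continuous at
`θ t * c`. Off the point `z₁ = z₂ = -i`, `h` is continuous. Since `π` is irrational, `θ` is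
injective and never meets that point, so the translated orbit `t ↦ θ t * c` passes through it at
most once, at some `t₀`, where one more extraction makes `u (t₀ + sₙ)` converge. Backwards,
`θ (t - sₙ) * c → θ t`, a continuity point of `h`.
-/

open Filter Topology Set Real

def IsAlmostAutomorphic {A Y : Type*} [AddGroup A] [TopologicalSpace Y] (u : A → Y) : Prop :=
  ∀ s' : ℕ → A, ∃ φ : ℕ → ℕ, StrictMono φ ∧ ∃ v : A → Y,
    (∀ t, Tendsto (fun n => u (t + s' (φ n))) atTop (𝓝 (v t))) ∧
    ∀ t, Tendsto (fun n => v (t - s' (φ n))) atTop (𝓝 (u t))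

namespace AddChar

variable {A K : Type*} [AddGroup A] [Group K] [TopologicalSpace K]
  {θ : AddChar A K} {s : ℕ → A} {c : K}

theorem tendsto_apply_add [IsTopologicalGroup K]
    (hs : Tendsto (fun n => θ (s n)) atTop (𝓝 c)) (t : A) :
    Tendsto (fun n => θ (t + s n)) atTop (𝓝 (θ t * c)) := by
  simpa only [map_add_eq_mul] using tendsto_const_nhds.mul hs

theorem tendsto_apply_sub_mul [IsTopologicalGroup K]
    (hs : Tendsto (fun n => θ (s n)) atTop (𝓝 c)) (t : A) :
    Tendsto (fun n => θ (t - s n) * c) atTop (𝓝 (θ t)) := by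
  have := (tendsto_const_nhds (x := θ t)).mul (hs.inv.mul (tendsto_const_nhds (x := c)))
  rw [inv_mul_cancel, mul_one] at this
  exact this.congr fun n => by
    rw [sub_eq_add_neg, map_add_eq_mul, map_neg_eq_inv, mul_assoc]

theorem eventually_continuousAt_apply_sub_mul [T2Space K] {Y : Type*}
    [TopologicalSpace Y] {h : K → Y} (hs : Tendsto (fun n => θ (s n)) atTop (𝓝 c))
    (hsing : {a | ¬ContinuousAt h (θ a * c)}.Subsingleton) {t : A}
    (ht : ContinuousAt h (θ t)) :
    ∀ᶠ n in atTop, ContinuousAt h (θ (t - s n) * c) := by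
  -- Otherwise `t - s n` hits the single bad time infinitely often, so `c` lies on the orbit of
  -- `θ` and the bad point would be `θ t` itself.
  by_contra hfreq
  rw [not_eventually] at hfreq
  obtain ⟨m, hm⟩ := hfreq.exists
  have hsm : ∃ᶠ n in atTop, s n = s m :=
    hfreq.mono fun n hn => by simpa using hsing hn hm
  have hc : c = θ (s m) :=
    tendsto_nhds_unique_of_frequently_eq hs tendsto_const_nhds (hsm.mono fun n hn => by rw [hn])
  apply hm
  rwa [hc, ← map_add_eq_mul, sub_add_cancel]

theorem isAlmostAutomorphic_comp [IsTopologicalGroup K] [T2Space K] [SeqCompactSpace K]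
    {Y : Type*} [MetricSpace Y] [ProperSpace Y] (θ : AddChar A K) {h : K → Y}
    (hbdd : Bornology.IsBounded (range h)) (hcont : ∀ a, ContinuousAt h (θ a))
    (hsing : ∀ c, {a | ¬ContinuousAt h (θ a * c)}.Subsingleton) :
    IsAlmostAutomorphic (h ∘ θ) := by
  classical
  intro s'
  obtain ⟨c, φ₁, hφ₁, hc⟩ := SeqCompactSpace.tendsto_subseq (fun n => θ (s' n))
  obtain ⟨t₀, ht₀⟩ : ∃ t₀, ∀ a, ¬ContinuousAt h (θ a * c) → a = t₀ := by
    by_cases hex : ∃ t₀, ¬ContinuousAt h (θ t₀ * c)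
    · obtain ⟨t₀, ht₀⟩ := hex
      exact ⟨t₀, fun a ha => hsing c ha ht₀⟩
    · exact ⟨0, fun a ha => (hex ⟨a, ha⟩).elim⟩
  obtain ⟨L, -, φ₂, hφ₂, hL⟩ :=
    tendsto_subseq_of_bounded hbdd (fun n => mem_range_self (θ (t₀ + s' (φ₁ n))))
  have hs : Tendsto (fun n => θ (s' ((φ₁ ∘ φ₂) n))) atTop (𝓝 c) :=
    hc.comp hφ₂.tendsto_atTop
  refine ⟨φ₁ ∘ φ₂, hφ₁.comp hφ₂,
    fun a => if ContinuousAt h (θ a * c) then h (θ a * c) else L, fun t => ?_, fun t => ?_⟩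
  · dsimp only
    split_ifs with ht
    · exact ht.tendsto.comp (θ.tendsto_apply_add hs t)
    · exact ht₀ t ht ▸ hL
  · refine ((hcont t).tendsto.comp (θ.tendsto_apply_sub_mul hs t)).congr' ?_
    filter_upwards [θ.eventually_continuousAt_apply_sub_mul hs (hsing c) (hcont t)] with n hn
    exact (if_pos hn).symm

end AddChar

theorem eq_zero_of_pi_mul_intCast_eq_intCast {m n : ℤ} (h : π * m = n) : m = 0 := by
  by_contra hm
  exact (irrational_pi.mul_intCast hm).ne_int n h

theorem Circle.neg_one_le_im (z : Circle) : -1 ≤ (z : ℂ).im := by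
  have := Complex.abs_im_le_norm (z : ℂ)
  rw [Circle.norm_coe] at this
  exact (abs_le.1 this).1

theorem Circle.eq_of_im_eq_neg_one {z w : Circle} (hz : (z : ℂ).im = -1)
    (hw : (w : ℂ).im = -1) : z = w := by
  have hre : ∀ u : Circle, (u : ℂ).im = -1 → (u : ℂ).re = 0 := fun u hu =>
    Complex.abs_im_eq_norm.1 (by rw [hu, Circle.norm_coe]; norm_num)
  exact Circle.ext (Complex.ext (by rw [hre z hz, hre w hw]) (by rw [hz, hw]))

noncomputable def torusWinding : AddChar ℝ (Circle × Circle) where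
  toFun t := (Circle.exp t, Circle.exp (π * t))
  map_zero_eq_one' := by simp
  map_add_eq_mul' s t := by simp [mul_add]

theorem torusWinding_apply (t : ℝ) : torusWinding t = (Circle.exp t, Circle.exp (π * t)) := rfl

theorem torusWinding_injective : Function.Injective torusWinding := by
  intro a b hab
  simp only [torusWinding_apply, Prod.mk.injEq, Circle.exp_eq_exp] at hab
  obtain ⟨⟨m, hm⟩, ⟨n, hn⟩⟩ := hab
  have hπm : π * m = n := by
    have h2π : (2 * π) ≠ 0 := by positivity
    apply mul_right_cancel₀ h2π
    linear_combination hn - π * hm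
  rw [hm, eq_zero_of_pi_mul_intCast_eq_intCast hπm]
  simp

theorem two_add_sin_add_sin_pi_mul_pos (t : ℝ) : 0 < 2 + sin t + sin (π * t) := by
  rcases (neg_one_le_sin t).eq_or_lt with h₁ | h₁
  · rcases (neg_one_le_sin (π * t)).eq_or_lt with h₂ | h₂
    · obtain ⟨k, hk⟩ := sin_eq_neg_one_iff.1 h₁.symm
      obtain ⟨m, hm⟩ := sin_eq_neg_one_iff.1 h₂.symm
      -- `t = 2πk - π/2` and `πt = 2πm - π/2` force `π (4k - 1) = 4m - 1`
      have key : π * ((4 * k - 1 : ℤ) : ℝ) = ((4 * m - 1 : ℤ) : ℝ) := by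
        apply mul_left_cancel₀ pi_ne_zero
        push_cast
        linear_combination 2 * π * hk - 2 * hm
      have := eq_zero_of_pi_mul_intCast_eq_intCast key
      omega
    · linarith [sin_le_one t]
  · linarith [neg_one_le_sin (π * t)]

def torusDenom (z : Circle × Circle) : ℝ := 2 + (z.1 : ℂ).im + (z.2 : ℂ).im

theorem torusDenom_torusWinding (t : ℝ) :
    torusDenom (torusWinding t) = 2 + sin t + sin (π * t) := by
  simp only [torusDenom, torusWinding_apply, Circle.coe_exp, Complex.exp_ofReal_mul_I_im]

theorem im_eq_neg_one_of_torusDenom_eq_zero {z : Circle × Circle} (hz : torusDenom z = 0) :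
    (z.1 : ℂ).im = -1 ∧ (z.2 : ℂ).im = -1 := by
  have h₁ := Circle.neg_one_le_im z.1
  have h₂ := Circle.neg_one_le_im z.2
  unfold torusDenom at hz
  constructor <;> linarith

theorem subsingleton_torusDenom_mul_eq_zero (c : Circle × Circle) :
    {a | torusDenom (torusWinding a * c) = 0}.Subsingleton := by
  intro a ha b hb
  obtain ⟨ha₁, ha₂⟩ := im_eq_neg_one_of_torusDenom_eq_zero ha
  obtain ⟨hb₁, hb₂⟩ := im_eq_neg_one_of_torusDenom_eq_zero hb
  apply torusWinding_injective
  apply mul_right_cancel (b := c)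
  exact Prod.ext (Circle.eq_of_im_eq_neg_one ha₁ hb₁) (Circle.eq_of_im_eq_neg_one ha₂ hb₂)

noncomputable def torusProfile (z : Circle × Circle) : ℝ := sin (1 / torusDenom z)

theorem torusProfile_comp_torusWinding :
    torusProfile ∘ torusWinding = fun t => sin (1 / (2 + sin t + sin (π * t))) :=
  funext fun t => by rw [Function.comp_apply, torusProfile, torusDenom_torusWinding]

theorem isBounded_range_torusProfile : Bornology.IsBounded (range torusProfile) :=
  Metric.isBounded_Icc (-1 : ℝ) 1 |>.subset <|
    range_subset_iff.2 fun _ => ⟨neg_one_le_sin _, sin_le_one _⟩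

theorem continuousAt_torusProfile {z : Circle × Circle} (hz : torusDenom z ≠ 0) :
    ContinuousAt torusProfile z := by
  unfold torusProfile torusDenom at *
  fun_prop (disch := exact hz)

theorem continuousAt_torusProfile_torusWinding (t : ℝ) :
    ContinuousAt torusProfile (torusWinding t) :=
  continuousAt_torusProfile <| by
    rw [torusDenom_torusWinding]; exact (two_add_sin_add_sin_pi_mul_pos t).ne'

theorem subsingleton_not_continuousAt_torusProfile (c : Circle × Circle) :
    {a | ¬ContinuousAt torusProfile (torusWinding a * c)}.Subsingleton :=
  (subsingleton_torusDenom_mul_eq_zero c).anti fun _ ha =>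
    not_not.1 (mt continuousAt_torusProfile ha)

/-- the function `u(t) = sin(1/(2 + sin t + sin πt))` is almost
automorphic in Bochner's sense. -/
theorem stmt19 :
    ∀ s' : ℕ → ℝ, ∃ φ : ℕ → ℕ, StrictMono φ ∧ ∃ v : ℝ → ℝ,
      (∀ t : ℝ, Tendsto
        (fun n => Real.sin (1 / (2 + Real.sin (t + s' (φ n)) +
          Real.sin (Real.pi * (t + s' (φ n)))))) atTop (𝓝 (v t))) ∧
      (∀ t : ℝ, Tendsto (fun n => v (t - s' (φ n))) atTop
        (𝓝 (Real.sin (1 / (2 + Real.sin t + Real.sin (Real.pi * t)))))) := by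
  have h := torusWinding.isAlmostAutomorphic_comp isBounded_range_torusProfile
    continuousAt_torusProfile_torusWinding subsingleton_not_continuousAt_torusProfile
  rwa [torusProfile_comp_torusWinding] at h
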